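/- For the randomized Kaczmarz method, a single expected step contracts the error: if rows are selected with probability ‖a_i‖²/‖A‖_F², and x* solves Ax = b, then E‖x_{k+1} − x*‖² ≤ (1 − σ_min(A)²/‖A‖_F²)·‖x_k − x*‖², where σ_min(A) is the smallest singular value of A (assumed A has full column rank). -/

import Mathlib

/-!
Writing `e = x - x*`, the Kaczmarz step with row `a` replaces `e` by its orthogonal projection
onto `a⊥`, so by Pythagoras it lowers `‖e‖²` by exactly `⟪a, e⟫² / ‖a‖²`. Weighting row `i` by
`‖a i‖² / ‖A‖_F²` cancels the denominators: the expected decrease is `‖A e‖² / ‖A‖_F²`, which is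
at least `σ² ‖e‖² / ‖A‖_F²`.
-/

open scoped RealInnerProductSpace

section Kaczmarz

variable {E : Type*} [NormedAddCommGroup E] [InnerProductSpace ℝ E]

noncomputable def kaczmarzStep (a : E) (β : ℝ) (x : E) : E :=
  x + ((β - ⟪a, x⟫) / ‖a‖ ^ 2) • a

theorem norm_sub_inner_div_norm_sq_smul_sq (a e : E) :
    ‖e - (⟪a, e⟫ / ‖a‖ ^ 2) • a‖ ^ 2 = ‖e‖ ^ 2 - ⟪a, e⟫ ^ 2 / ‖a‖ ^ 2 := by
  rcases eq_or_ne a 0 with rfl | ha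
  · simp
  rw [norm_sub_sq_real, real_inner_smul_right, norm_smul, mul_pow, Real.norm_eq_abs, sq_abs,
    real_inner_comm]
  field_simp
  ring

theorem kaczmarzStep_sub_eq {a xs : E} {β : ℝ} (hxs : ⟪a, xs⟫ = β) (x : E) :
    kaczmarzStep a β x - xs = (x - xs) - (⟪a, x - xs⟫ / ‖a‖ ^ 2) • a := by
  rw [kaczmarzStep, ← hxs, inner_sub_right, ← neg_sub ⟪a, x⟫, neg_div, neg_smul, ← sub_eq_add_neg,
    sub_right_comm]

-- Multiplied through by `‖a‖²`, so that it also holds for `a = 0`, where the step divides by zero.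
theorem sq_norm_mul_norm_kaczmarzStep_sub_sq {a xs : E} {β : ℝ} (hxs : ⟪a, xs⟫ = β) (x : E) :
    ‖a‖ ^ 2 * ‖kaczmarzStep a β x - xs‖ ^ 2 = ‖a‖ ^ 2 * ‖x - xs‖ ^ 2 - ⟪a, x - xs⟫ ^ 2 := by
  rw [kaczmarzStep_sub_eq hxs, norm_sub_inner_div_norm_sq_smul_sq, mul_sub]
  rcases eq_or_ne a 0 with rfl | ha
  · simp
  · rw [mul_div_cancel₀ _ (by positivity)]

variable {ι : Type*} [Fintype ι]

theorem sum_weighted_norm_kaczmarzStep_sub_sq (a : ι → E) {b : ι → ℝ} {xs : E}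
    (hxs : ∀ i, ⟪a i, xs⟫ = b i) (x : E) :
    ∑ i, (‖a i‖ ^ 2 / ∑ j, ‖a j‖ ^ 2) * ‖kaczmarzStep (a i) (b i) x - xs‖ ^ 2
      = ((∑ j, ‖a j‖ ^ 2) * ‖x - xs‖ ^ 2 - ∑ i, ⟪a i, x - xs⟫ ^ 2) / ∑ j, ‖a j‖ ^ 2 := by
  simp_rw [div_mul_eq_mul_div, ← Finset.sum_div, sq_norm_mul_norm_kaczmarzStep_sub_sq (hxs _),
    Finset.sum_sub_distrib, Finset.sum_mul]

theorem sum_weighted_norm_kaczmarzStep_sub_sq_le (a : ι → E) {b : ι → ℝ} {xs : E}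
    (hxs : ∀ i, ⟪a i, xs⟫ = b i) {σ : ℝ} (hσ : ∀ z, σ ^ 2 * ‖z‖ ^ 2 ≤ ∑ i, ⟪a i, z⟫ ^ 2) (x : E) :
    ∑ i, (‖a i‖ ^ 2 / ∑ j, ‖a j‖ ^ 2) * ‖kaczmarzStep (a i) (b i) x - xs‖ ^ 2
      ≤ (1 - σ ^ 2 / ∑ j, ‖a j‖ ^ 2) * ‖x - xs‖ ^ 2 := by
  set F := ∑ j, ‖a j‖ ^ 2
  have hF : 0 ≤ F := by positivity
  rw [sum_weighted_norm_kaczmarzStep_sub_sq a hxs]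
  calc (F * ‖x - xs‖ ^ 2 - ∑ i, ⟪a i, x - xs⟫ ^ 2) / F
      ≤ (F * ‖x - xs‖ ^ 2 - σ ^ 2 * ‖x - xs‖ ^ 2) / F := by
        gcongr
        exact hσ _
    _ = F / F * ‖x - xs‖ ^ 2 - σ ^ 2 / F * ‖x - xs‖ ^ 2 := by ring
    _ ≤ (1 - σ ^ 2 / F) * ‖x - xs‖ ^ 2 := by
        rw [sub_mul, one_mul]
        gcongr
        exact mul_le_of_le_one_left (by positivity) (div_self_le_one F)

end Kaczmarz

theorem randomized_kaczmarz_expected_contraction_general (m n : ℕ)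
    (a : Fin m → EuclideanSpace ℝ (Fin n))
    (b : Fin m → ℝ) (σ : ℝ)
    (hσ : ∀ z : EuclideanSpace ℝ (Fin n), σ^2 * ‖z‖^2 ≤ ∑ i, (inner ℝ (a i) z : ℝ)^2)
    (x xs : EuclideanSpace ℝ (Fin n))
    (hxs : ∀ i, (inner ℝ (a i) xs : ℝ) = b i) :
    ∑ i, (‖a i‖^2 / ∑ j, ‖a j‖^2) *
        ‖x + ((b i - (inner ℝ (a i) x : ℝ)) / ‖a i‖^2) • a i - xs‖^2
      ≤ (1 - σ^2 / ∑ j, ‖a j‖^2) * ‖x - xs‖^2 :=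
  sum_weighted_norm_kaczmarzStep_sub_sq_le a hxs hσ x

/-- Expected one-step contraction of the randomized Kaczmarz method: with rows
selected with probability `‖a i‖²/‖A‖_F²` (where `‖A‖_F² = ∑ j, ‖a j‖²`), and
`σ` the smallest singular value of `A` (so that `‖Az‖² ≥ σ²‖z‖²` for all `z`,
`σ > 0` by full column rank), the expected squared error after one step satisfies
`E‖x' - x*‖² ≤ (1 - σ²/‖A‖_F²)‖x - x*‖²`. -/
theorem randomized_kaczmarz_expected_contraction (m n : ℕ)
    (a : Fin m → EuclideanSpace ℝ (Fin n)) (ha : ∀ i, a i ≠ 0)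
    (b : Fin m → ℝ) (σ : ℝ) (hσpos : 0 < σ)
    (hσ : ∀ z : EuclideanSpace ℝ (Fin n), σ^2 * ‖z‖^2 ≤ ∑ i, (inner ℝ (a i) z : ℝ)^2)
    (x xs : EuclideanSpace ℝ (Fin n))
    (hxs : ∀ i, (inner ℝ (a i) xs : ℝ) = b i) :
    ∑ i, (‖a i‖^2 / ∑ j, ‖a j‖^2) *
        ‖x + ((b i - (inner ℝ (a i) x : ℝ)) / ‖a i‖^2) • a i - xs‖^2
      ≤ (1 - σ^2 / ∑ j, ‖a j‖^2) * ‖x - xs‖^2 :=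
  randomized_kaczmarz_expected_contraction_general m n a b σ hσ x xs hxs
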